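/- arXiv:2411.18144 — 2 statements merged into one kernel-verified Lean document; each statement's English description precedes it below -/
import Mathlib

section
/- Let γ1, γ2, γ3, γ4, γ5, γ6, γ7, τ, w, w', R, R' be positive reals with γ2 + γ5 > γ3, and set S = γ1 + γ2 + γ4 + γ5 + γ6 + γ7. Define u(c, n, e, p, s, q) = γ1 ln c + γ2 ln n + γ3 ln e + γ4 ln p + γ5 ln(n w') + γ6 ln(R s) + γ7 ln(R' q). Then for every tuple of positive reals (c, n, e, p, s, q) satisfying the budget constraint w(1 − τ n) = c + s + e n + p + q, one has u(c, n, e, p, s, q) ≤ u(c*, n*, e*, p*, s*, q*), where c* = γ1 w/S, s* = γ6 w/S, p* = γ4 w/S, q* = γ7 w/S, n* = (γ2 + γ5 − γ3)/(τ S), e* = γ3 w τ/(γ2 + γ5 − γ3). That is, the stated formulas globally maximize lifetime utility subject to the budget constraint. -/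
/-!
Writing `m = e * n` for total spending on education, the budget constraint becomes linear,
`c + (τ w) n + m + p + s + q = w`, and up to a constant the utility is
`γ1 log c + (γ2 + γ5 - γ3) log n + γ3 log m + γ4 log p + γ6 log s + γ7 log q`,
a weighted sum of logarithms with positive weights. The candidate optimum satisfies the
first-order conditions `weight = (S / w) * price * quantity`, and `log t ≤ t - 1` turns these
into the global inequality.
-/

open Finset Real

theorem mul_log_sub_log_le {a x y : ℝ} (ha : 0 ≤ a) (hx : 0 < x) (hy : 0 < y) :
    a * (log x - log y) ≤ a * (x / y - 1) := by
  rw [← log_div hx.ne' hy.ne']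
  exact mul_le_mul_of_nonneg_left (log_le_sub_one_of_pos (div_pos hx hy)) ha

theorem sum_mul_log_le_of_first_order_conditions {ι : Type*} (s : Finset ι) {a b x y : ι → ℝ}
    {lam : ℝ} (hlam : 0 ≤ lam) (ha : ∀ i ∈ s, 0 ≤ a i) (hx : ∀ i ∈ s, 0 < x i)
    (hy : ∀ i ∈ s, 0 < y i) (hfoc : ∀ i ∈ s, a i = lam * b i * y i)
    (hbudget : ∑ i ∈ s, b i * x i ≤ ∑ i ∈ s, b i * y i) :
    ∑ i ∈ s, a i * log (x i) ≤ ∑ i ∈ s, a i * log (y i) := by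
  have hterm : ∀ i ∈ s,
      a i * (log (x i) - log (y i)) ≤ lam * (b i * x i) - lam * (b i * y i) := by
    intro i hi
    have hyi := (hy i hi).ne'
    calc a i * (log (x i) - log (y i)) ≤ a i * (x i / y i - 1) :=
          mul_log_sub_log_le (ha i hi) (hx i hi) (hy i hi)
      _ = lam * (b i * x i) - lam * (b i * y i) := by rw [hfoc i hi]; field_simp
  have hsum := sum_le_sum hterm
  simp only [mul_sub, sum_sub_distrib, ← mul_sum] at hsum
  linarith [mul_le_mul_of_nonneg_left hbudget hlam]

theorem log_utility_eq_sum {γ1 γ2 γ3 γ4 γ5 γ6 γ7 w' R R' c n e p s q : ℝ}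
    (hw' : 0 < w') (hR : 0 < R) (hR' : 0 < R') (hn : 0 < n) (he : 0 < e) (hs : 0 < s)
    (hq : 0 < q) :
    γ1 * log c + γ2 * log n + γ3 * log e + γ4 * log p + γ5 * log (n * w')
        + γ6 * log (R * s) + γ7 * log (R' * q)
      = ∑ i, ![γ1, γ2 + γ5 - γ3, γ3, γ4, γ6, γ7] i * log (![c, n, e * n, p, s, q] i)
        + (γ5 * log w' + γ6 * log R + γ7 * log R') := by
  simp only [Fin.sum_univ_six, Matrix.cons_val]
  rw [log_mul hn.ne' hw'.ne', log_mul hR.ne' hs.ne', log_mul hR'.ne' hq.ne',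
    log_mul he.ne' hn.ne']
  ring

theorem optimum_is_global_max_general
    (γ1 γ2 γ3 γ4 γ5 γ6 γ7 τ w w' R R' : ℝ)
    (h1 : 0 < γ1) (h3 : 0 < γ3) (h4 : 0 < γ4)
    (h6 : 0 < γ6) (h7 : 0 < γ7)
    (hτ : 0 < τ) (hw : 0 < w) (hw' : 0 < w') (hR : 0 < R) (hR' : 0 < R')
    (hqq : γ3 < γ2 + γ5)
    (S : ℝ) (hS : S = γ1 + γ2 + γ4 + γ5 + γ6 + γ7)
    (u : ℝ → ℝ → ℝ → ℝ → ℝ → ℝ → ℝ)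
    (hu : ∀ c n e p s q : ℝ,
      u c n e p s q = γ1 * Real.log c + γ2 * Real.log n + γ3 * Real.log e
        + γ4 * Real.log p + γ5 * Real.log (n * w')
        + γ6 * Real.log (R * s) + γ7 * Real.log (R' * q))
    (cStar nStar eStar pStar sStar qStar : ℝ)
    (hc : cStar = γ1 * w / S) (hs : sStar = γ6 * w / S)
    (hp : pStar = γ4 * w / S) (hq : qStar = γ7 * w / S)
    (hn : nStar = (γ2 + γ5 - γ3) / (τ * S))
    (he : eStar = γ3 * w * τ / (γ2 + γ5 - γ3)) :
    ∀ c n e p s q : ℝ,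
      0 < c → 0 < n → 0 < e → 0 < p → 0 < s → 0 < q →
      w * (1 - τ * n) = c + s + e * n + p + q →
      u c n e p s q ≤ u cStar nStar eStar pStar sStar qStar := by
  intro c n e p s q hc0 hn0 he0 hp0 hs0 hq0 hbudget
  have hA : 0 < γ2 + γ5 - γ3 := by linarith
  have hS0 : 0 < S := by rw [hS]; linarith
  have hcS : 0 < cStar := by rw [hc]; positivity
  have hnS : 0 < nStar := by rw [hn]; positivity
  have heS : 0 < eStar := by rw [he]; positivity
  have hpS : 0 < pStar := by rw [hp]; positivity
  have hsS : 0 < sStar := by rw [hs]; positivity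
  have hqS : 0 < qStar := by rw [hq]; positivity
  have hbudgetStar : cStar + τ * w * nStar + eStar * nStar + pStar + sStar + qStar = w := by
    rw [hc, hn, he, hp, hs, hq]
    field_simp
    rw [hS]
    ring
  have hlog := sum_mul_log_le_of_first_order_conditions univ
    (a := ![γ1, γ2 + γ5 - γ3, γ3, γ4, γ6, γ7]) (b := ![1, τ * w, 1, 1, 1, 1])
    (x := ![c, n, e * n, p, s, q]) (y := ![cStar, nStar, eStar * nStar, pStar, sStar, qStar])
    (div_pos hS0 hw).le
    (by intro i _; fin_cases i <;> simp [hA.le] <;> positivity)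
    (by intro i _; fin_cases i <;> simp <;> positivity)
    (by intro i _; fin_cases i <;> simp [hcS, hnS, heS, hpS, hsS, hqS])
    (by intro i _; fin_cases i <;> simp [hc, hn, he, hp, hs, hq] <;> field_simp)
    (by simp [Fin.sum_univ_six]; linarith)
  rw [hu, hu, log_utility_eq_sum hw' hR hR' hn0 he0 hs0 hq0,
    log_utility_eq_sum hw' hR hR' hnS heS hsS hqS]
  linarith

/-- The stated formulas globally maximize lifetime utility subject
to the budget constraint. -/
theorem optimum_is_global_max
    (γ1 γ2 γ3 γ4 γ5 γ6 γ7 τ w w' R R' : ℝ)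
    (h1 : 0 < γ1) (h2 : 0 < γ2) (h3 : 0 < γ3) (h4 : 0 < γ4)
    (h5 : 0 < γ5) (h6 : 0 < γ6) (h7 : 0 < γ7)
    (hτ : 0 < τ) (hw : 0 < w) (hw' : 0 < w') (hR : 0 < R) (hR' : 0 < R')
    (hqq : γ3 < γ2 + γ5)
    (S : ℝ) (hS : S = γ1 + γ2 + γ4 + γ5 + γ6 + γ7)
    (u : ℝ → ℝ → ℝ → ℝ → ℝ → ℝ → ℝ)
    (hu : ∀ c n e p s q : ℝ,
      u c n e p s q = γ1 * Real.log c + γ2 * Real.log n + γ3 * Real.log e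
        + γ4 * Real.log p + γ5 * Real.log (n * w')
        + γ6 * Real.log (R * s) + γ7 * Real.log (R' * q))
    (cStar nStar eStar pStar sStar qStar : ℝ)
    (hc : cStar = γ1 * w / S) (hs : sStar = γ6 * w / S)
    (hp : pStar = γ4 * w / S) (hq : qStar = γ7 * w / S)
    (hn : nStar = (γ2 + γ5 - γ3) / (τ * S))
    (he : eStar = γ3 * w * τ / (γ2 + γ5 - γ3)) :
    ∀ c n e p s q : ℝ,
      0 < c → 0 < n → 0 < e → 0 < p → 0 < s → 0 < q →
      w * (1 - τ * n) = c + s + e * n + p + q →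
      u c n e p s q ≤ u cStar nStar eStar pStar sStar qStar :=
  optimum_is_global_max_general γ1 γ2 γ3 γ4 γ5 γ6 γ7 τ w w' R R' h1 h3 h4 h6 h7 hτ hw hw' hR hR' hqq
    S hS u hu cStar nStar eStar pStar sStar qStar hc hs hp hq hn he
end

section
/- Let γ1, γ3, γ4, γ5, γ6, γ7, τ be positive reals. The optimal number of children n(γ2) = (γ2 + γ5 − γ3)/(τ(γ1 + γ2 + γ4 + γ5 + γ6 + γ7)), viewed as a function of γ2 on (0, ∞), has derivative at each γ2 > 0 equal to (γ1 + γ3 + γ4 + γ6 + γ7)/(τ S²), where S = γ1 + γ2 + γ4 + γ5 + γ6 + γ7; in particular this derivative is strictly positive, so the optimal number of children is strictly increasing in the weight γ2 on the number of children. -/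
theorem hasDerivAt_add_div_mul_add {𝕜 : Type*} [NontriviallyNormedField 𝕜] {a b c x : 𝕜}
    (hc : c ≠ 0) (hx : x + b ≠ 0) :
    HasDerivAt (fun y => (y + a) / (c * (y + b))) ((b - a) / (c * (x + b) ^ 2)) x := by
  have hnum := (hasDerivAt_id' x).add_const a
  have hden := ((hasDerivAt_id' x).add_const b).const_mul c
  refine (hnum.div hden (mul_ne_zero hc hx)).congr_deriv ?_
  field_simp
  ring

/-- The optimal number of children is strictly increasing in the
weight γ2 on the number of children. -/
theorem children_increasing_in_child_weight
    (γ1 γ3 γ4 γ5 γ6 γ7 τ : ℝ)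
    (h1 : 0 < γ1) (h3 : 0 < γ3) (h4 : 0 < γ4)
    (h5 : 0 < γ5) (h6 : 0 < γ6) (h7 : 0 < γ7) (hτ : 0 < τ) :
    ∀ γ2 : ℝ, 0 < γ2 →
      HasDerivAt (fun x : ℝ => (x + γ5 - γ3) / (τ * (γ1 + x + γ4 + γ5 + γ6 + γ7)))
        ((γ1 + γ3 + γ4 + γ6 + γ7) / (τ * (γ1 + γ2 + γ4 + γ5 + γ6 + γ7) ^ 2)) γ2 ∧
      0 < (γ1 + γ3 + γ4 + γ6 + γ7) / (τ * (γ1 + γ2 + γ4 + γ5 + γ6 + γ7) ^ 2) := by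
  intro γ2 h2
  refine ⟨?_, by positivity⟩
  have hS : γ2 + (γ1 + γ4 + γ5 + γ6 + γ7) ≠ 0 := by positivity
  have hf : (fun x : ℝ => (x + γ5 - γ3) / (τ * (γ1 + x + γ4 + γ5 + γ6 + γ7))) =
      fun x => (x + (γ5 - γ3)) / (τ * (x + (γ1 + γ4 + γ5 + γ6 + γ7))) := by
    funext x
    congr 1 <;> ring
  rw [hf]
  exact (hasDerivAt_add_div_mul_add hτ.ne' hS).congr_deriv (by ring)
end
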